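/- In the setting of conditioned SGD, let C = U D Uᵀ be an eigenvalue decomposition of C = (1/m) Σ x_i x_iᵀ with eigenvalues λ₁ ≥ … ≥ λₙ on the diagonal of D, assume λ_k > 0 and tr(C) > tr(C_k) where C_k = U_k D_k U_kᵀ is the best rank-k approximation of C (U_k the first k columns of U, D_k the top-left k×k block of D). Run the algorithm with conditioner A = Q B Qᵀ + a(I − QQᵀ) where Q = U_k, B = (Qᵀ C Q)^{1/2}, a = √((tr(C) − tr(QᵀCQ))/(n−k)), and learning rate η = σ/(ρ√T) with σ ≥ ‖W*‖_spectral. Then E[L(W̄) − L(W*)] ≤ (σρ/√T) · ( tr(C_k^{1/2}) + √((n−k)(tr(C) − tr(C_k))) ). -/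

import Mathlib

/-!
Since `Qᵀ C Q = diag (λ₁, …, λ_k)`, the square root is `B = diag (√λᵢ)`, so `A` acts as `√λᵢ` on
the top `k` eigenvectors of `C` and as `a` on their orthogonal complement. Hence `A` is positive
definite, and the choice of `a` makes
`tr A = tr (A⁻¹ C) = tr (C_k^{1/2}) + √((n - k)(tr C - tr C_k))`.

With the potential `tr ((W_t - W*) A (W_t - W*)ᵀ)`, the step `g_t (A⁻¹ x)ᵀ` is a subgradient step in
the geometry of `A`; as subgradients of `ρ`-Lipschitz losses have norm at most `ρ`, telescoping
bounds `2η Σ_t (ℓ(W_t x_{i_t}) - ℓ(W* x_{i_t}))` by `tr (W* A W*ᵀ) + η² ρ² Σ_t x_{i_t}ᵀ A⁻¹ x_{i_t}`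
along every sample path. Since `W_t` does not depend on `i_t`, averaging over `i_t` turns the left
side into `2η Σ_t E[L(W_t) - L(W*)]` and `x_{i_t}ᵀ A⁻¹ x_{i_t}` into `tr (A⁻¹ C)`. Jensen passes to
`W̄`, `tr (W* A W*ᵀ) ≤ σ² tr A`, and `η = σ / (ρ √T)` balances the two terms.
-/

open Matrix

lemma trace_mul_mul_transpose_of_transpose_mul_self_eq_one {ι κ : Type*} [Fintype ι] [Fintype κ]
    [DecidableEq κ] {Q : Matrix ι κ ℝ} (hQ : Qᵀ * Q = 1) (M : Matrix κ κ ℝ) :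
    (Q * M * Qᵀ).trace = M.trace := by
  rw [Matrix.mul_assoc, trace_mul_comm, Matrix.mul_assoc, hQ, Matrix.mul_one]

section Conditioner

variable {ι κ : Type*} [Fintype κ] [DecidableEq ι]

def lowRankConditioner (Q : Matrix ι κ ℝ) (B : Matrix κ κ ℝ) (a : ℝ) : Matrix ι ι ℝ :=
  Q * B * Qᵀ + a • (1 - Q * Qᵀ)

lemma lowRankConditioner_one_one [DecidableEq κ] (Q : Matrix ι κ ℝ) :
    lowRankConditioner Q 1 1 = 1 := by
  simp [lowRankConditioner]

variable [Fintype ι] {Q : Matrix ι κ ℝ}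

lemma transpose_mul_one_sub_mul_transpose [DecidableEq κ] (hQ : Qᵀ * Q = 1) :
    Qᵀ * (1 - Q * Qᵀ) = 0 := by
  rw [Matrix.mul_sub, Matrix.mul_one, ← Matrix.mul_assoc, hQ, Matrix.one_mul, sub_self]

lemma one_sub_mul_transpose_mul_self [DecidableEq κ] (hQ : Qᵀ * Q = 1) :
    (1 - Q * Qᵀ) * (1 - Q * Qᵀ) = 1 - Q * Qᵀ := by
  rw [Matrix.sub_mul, Matrix.one_mul, Matrix.mul_assoc Q,
    transpose_mul_one_sub_mul_transpose hQ, Matrix.mul_zero, sub_zero]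

lemma lowRankConditioner_mul_lowRankConditioner [DecidableEq κ] (hQ : Qᵀ * Q = 1)
    (B B' : Matrix κ κ ℝ) (a b : ℝ) :
    lowRankConditioner Q B a * lowRankConditioner Q B' b
      = lowRankConditioner Q (B * B') (a * b) := by
  have hPQ : (1 - Q * Qᵀ) * Q = 0 := by
    rw [Matrix.sub_mul, Matrix.one_mul, Matrix.mul_assoc, hQ, Matrix.mul_one, sub_self]
  have hBB' : Q * B * Qᵀ * (Q * B' * Qᵀ) = Q * (B * B') * Qᵀ := by
    simp only [Matrix.mul_assoc]; rw [← Matrix.mul_assoc Qᵀ Q, hQ, Matrix.one_mul]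
  have hBP : Q * B * Qᵀ * (1 - Q * Qᵀ) = 0 := by
    rw [Matrix.mul_assoc, transpose_mul_one_sub_mul_transpose hQ, Matrix.mul_zero]
  have hPB' : (1 - Q * Qᵀ) * (Q * B' * Qᵀ) = 0 := by
    rw [← Matrix.mul_assoc, ← Matrix.mul_assoc, hPQ, Matrix.zero_mul, Matrix.zero_mul]
  rw [lowRankConditioner, lowRankConditioner, lowRankConditioner, Matrix.add_mul, Matrix.mul_add,
    Matrix.mul_add, Matrix.mul_smul, Matrix.smul_mul, Matrix.smul_mul, Matrix.mul_smul, hBB', hBP,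
    hPB', one_sub_mul_transpose_mul_self hQ, smul_zero, smul_zero, smul_smul,
    add_zero, zero_add]

lemma inv_lowRankConditioner [DecidableEq κ] (hQ : Qᵀ * Q = 1) {B B' : Matrix κ κ ℝ}
    (hB : B * B' = 1) {a : ℝ} (ha : a ≠ 0) :
    (lowRankConditioner Q B a)⁻¹ = lowRankConditioner Q B' a⁻¹ :=
  inv_eq_right_inv <| by
    rw [lowRankConditioner_mul_lowRankConditioner hQ, hB, mul_inv_cancel₀ ha,
      lowRankConditioner_one_one]

lemma trace_lowRankConditioner [DecidableEq κ] (hQ : Qᵀ * Q = 1) (B : Matrix κ κ ℝ) (a : ℝ) :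
    (lowRankConditioner Q B a).trace
      = B.trace + a * (Fintype.card ι - Fintype.card κ) := by
  rw [lowRankConditioner, trace_add, trace_smul, trace_sub, trace_one, trace_mul_comm Q, hQ,
    trace_one, trace_mul_mul_transpose_of_transpose_mul_self_eq_one hQ, smul_eq_mul]

lemma trace_lowRankConditioner_mul (B : Matrix κ κ ℝ) (a : ℝ) (C : Matrix ι ι ℝ) :
    (lowRankConditioner Q B a * C).trace
      = (B * (Qᵀ * C * Q)).trace + a * (C.trace - (Qᵀ * C * Q).trace) := by
  rw [lowRankConditioner, Matrix.add_mul, trace_add, Matrix.smul_mul, trace_smul, Matrix.sub_mul,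
    Matrix.one_mul, trace_sub, smul_eq_mul, Matrix.mul_assoc Q, Matrix.mul_assoc Q,
    trace_mul_comm Q, Matrix.mul_assoc Q, trace_mul_comm Q]
  simp only [Matrix.mul_assoc]

lemma posSemidef_lowRankConditioner [DecidableEq κ] (hQ : Qᵀ * Q = 1) {B : Matrix κ κ ℝ}
    (hB : B.PosSemidef) {a : ℝ} (ha : 0 ≤ a) : (lowRankConditioner Q B a).PosSemidef := by
  have hP : 1 - Q * Qᵀ = (1 - Q * Qᵀ) * (1 - Q * Qᵀ)ᴴ := by
    rw [conjTranspose_eq_transpose_of_trivial, transpose_sub, transpose_one, transpose_mul,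
      transpose_transpose, one_sub_mul_transpose_mul_self hQ]
  refine (hB.mul_mul_conjTranspose_same Q).add ?_
  rw [hP]
  exact (posSemidef_self_mul_conjTranspose _).smul ha

lemma posDef_lowRankConditioner [DecidableEq κ] (hQ : Qᵀ * Q = 1) {B : Matrix κ κ ℝ} (hB : B.PosDef)
    {a : ℝ} (ha : 0 < a) : (lowRankConditioner Q B a).PosDef := by
  refine ((posSemidef_lowRankConditioner hQ hB.posSemidef ha.le).posDef_iff_isUnit).mpr ?_
  have hBinv : B * B⁻¹ = 1 := B.mul_nonsing_inv ((B.isUnit_iff_isUnit_det).mp hB.isUnit)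
  rw [isUnit_iff_isUnit_det]
  refine isUnit_det_of_right_inverse (B := lowRankConditioner Q B⁻¹ a⁻¹) ?_
  rw [lowRankConditioner_mul_lowRankConditioner hQ, hBinv, mul_inv_cancel₀ ha.ne',
    lowRankConditioner_one_one]

end Conditioner

lemma transpose_submatrix_mul_mul_submatrix {ι κ : Type*} [Fintype ι] (U M : Matrix ι ι ℝ)
    (c : κ → ι) :
    (U.submatrix id c)ᵀ * M * U.submatrix id c = (Uᵀ * M * U).submatrix c c := by
  rw [submatrix_mul _ _ _ id _ Function.bijective_id,
    submatrix_mul _ _ _ id _ Function.bijective_id, submatrix_id_id, transpose_submatrix]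

section Eigenbasis

variable {ι κ : Type*} [Fintype ι] [DecidableEq ι] [DecidableEq κ] {U : Matrix ι ι ℝ}
  {c : κ → ι}

lemma transpose_submatrix_mul_submatrix (hU : Uᵀ * U = 1) (hc : Function.Injective c) :
    (U.submatrix id c)ᵀ * U.submatrix id c = 1 := by
  simpa [hU, submatrix_one _ hc] using transpose_submatrix_mul_mul_submatrix U 1 c

lemma transpose_submatrix_mul_mul_submatrix_diagonal (hU : Uᵀ * U = 1)
    (hc : Function.Injective c) (d : ι → ℝ) :
    (U.submatrix id c)ᵀ * (U * diagonal d * Uᵀ) * U.submatrix id c = diagonal (d ∘ c) := by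
  have hUdU : Uᵀ * (U * diagonal d * Uᵀ) * U = diagonal d := by
    simp only [Matrix.mul_assoc]
    rw [hU, Matrix.mul_one, ← Matrix.mul_assoc, hU, Matrix.one_mul]
  rw [transpose_submatrix_mul_mul_submatrix, hUdU, submatrix_diagonal _ _ hc]

end Eigenbasis

lemma eq_diagonal_sqrt_of_mul_self_eq_diagonal {κ : Type*} [Fintype κ] [DecidableEq κ]
    {B : Matrix κ κ ℝ} (hB : B.PosSemidef) {d : κ → ℝ} (hd : ∀ i, 0 ≤ d i)
    (hBB : B * B = diagonal d) : B = diagonal fun i => √(d i) := by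
  open scoped MatrixOrder in
  refine (CFC.sq_eq_sq_iff B _ hB.nonneg
    (PosSemidef.diagonal fun i => Real.sqrt_nonneg _).nonneg).mp ?_
  rw [sq, sq, hBB, diagonal_mul_diagonal]
  simp only [Real.mul_self_sqrt (hd _)]

lemma sqrt_div_mul_self {s ν : ℝ} (hs : 0 ≤ s) (hν : 0 ≤ ν) : √(s / ν) * ν = √(ν * s) := by
  rcases hν.eq_or_lt with rfl | hν
  · simp
  rw [Real.sqrt_div hs, Real.sqrt_mul hν.le, div_mul_eq_mul_div,
    div_eq_iff (Real.sqrt_pos.mpr hν).ne']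
  nth_rewrite 1 [← Real.mul_self_sqrt hν.le]
  ring

lemma div_sqrt_div_self {s ν : ℝ} (hs : 0 ≤ s) (hν : 0 ≤ ν) : s / √(s / ν) = √(ν * s) := by
  rcases hs.eq_or_lt with rfl | hs
  · simp
  rcases hν.eq_or_lt with rfl | hν
  · simp
  rw [Real.sqrt_div hs.le, Real.sqrt_mul hν.le, div_div_eq_mul_div,
    div_eq_iff (Real.sqrt_pos.mpr hs).ne']
  nth_rewrite 1 [← Real.mul_self_sqrt hs.le]
  ring

lemma lowRankConditioner_posDef_and_traces {n k : ℕ} (hkn : k < n)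
    {C U : Matrix (Fin n) (Fin n) ℝ} (hU : Uᵀ * U = 1) {d : Fin n → ℝ}
    (hCdec : C = U * diagonal d * Uᵀ)
    (hlamk : ∀ i : Fin k, 0 < d (Fin.castLE hkn.le i)) {Q : Matrix (Fin n) (Fin k) ℝ}
    (hQ : Q = U.submatrix id (Fin.castLE hkn.le)) {Ck : Matrix (Fin n) (Fin n) ℝ}
    (hCk : Ck = Q * diagonal (fun i : Fin k => d (Fin.castLE hkn.le i)) * Qᵀ)
    (htr : Ck.trace < C.trace) {B : Matrix (Fin k) (Fin k) ℝ} (hBpsd : B.PosSemidef)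
    (hBsq : B * B = Qᵀ * C * Q) {a : ℝ}
    (ha : a = √((C.trace - (Qᵀ * C * Q).trace) / ((n : ℝ) - (k : ℝ)))) :
    (lowRankConditioner Q B a).PosDef
      ∧ (lowRankConditioner Q B a).trace
          = (∑ i : Fin k, √(d (Fin.castLE hkn.le i))) + √((n - k) * (C.trace - Ck.trace))
      ∧ ((lowRankConditioner Q B a)⁻¹ * C).trace
          = (∑ i : Fin k, √(d (Fin.castLE hkn.le i))) + √((n - k) * (C.trace - Ck.trace)) := by
  have hc := Fin.castLE_injective hkn.le
  have hQQ : Qᵀ * Q = 1 := hQ ▸ transpose_submatrix_mul_submatrix hU hc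
  have hQCQ : Qᵀ * C * Q = diagonal (d ∘ Fin.castLE hkn.le) := by
    rw [hQ, hCdec, transpose_submatrix_mul_mul_submatrix_diagonal hU hc]
  have hB : B = diagonal fun i => √(d (Fin.castLE hkn.le i)) :=
    eq_diagonal_sqrt_of_mul_self_eq_diagonal hBpsd (fun i => (hlamk i).le) (hBsq.trans hQCQ)
  have hBpos : B.PosDef := hB ▸ PosDef.diagonal fun i => Real.sqrt_pos.mpr (hlamk i)
  have hBdet : IsUnit B.det := (isUnit_iff_isUnit_det B).mp hBpos.isUnit
  have htrB : B.trace = ∑ i : Fin k, √(d (Fin.castLE hkn.le i)) := by rw [hB, trace_diagonal]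
  have htrCk : Ck.trace = (Qᵀ * C * Q).trace := by
    rw [hCk, trace_mul_mul_transpose_of_transpose_mul_self_eq_one hQQ, hQCQ]; rfl
  have hs : 0 < C.trace - Ck.trace := sub_pos.mpr htr
  have hν : (0 : ℝ) < n - k := sub_pos.mpr (by exact_mod_cast hkn)
  rw [← htrCk] at ha
  have ha0 : 0 < a := ha ▸ Real.sqrt_pos.mpr (div_pos hs hν)
  refine ⟨posDef_lowRankConditioner hQQ hBpos ha0, ?_, ?_⟩
  · rw [trace_lowRankConditioner hQQ, Fintype.card_fin, Fintype.card_fin, htrB, ha,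
      sqrt_div_mul_self hs.le hν.le]
  · rw [inv_lowRankConditioner hQQ (B.mul_nonsing_inv hBdet) ha0.ne',
      trace_lowRankConditioner_mul, ← htrCk, ← hBsq, ← Matrix.mul_assoc, nonsing_inv_mul B hBdet,
      Matrix.one_mul, htrB, inv_mul_eq_div, ha, div_sqrt_div_self hs.le hν.le]

lemma trace_mul_transpose_self_eq_sum_sq {ι κ : Type*} [Fintype ι] [Fintype κ]
    (M : Matrix κ ι ℝ) : (M * Mᵀ).trace = ∑ r, ∑ l, M r l ^ 2 := by
  simp [trace, mul_apply, sq]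

def SpectralNormLE {ι κ : Type*} [Fintype ι] [Fintype κ] (W : Matrix κ ι ℝ) (σ : ℝ) : Prop :=
  ∀ v : ι → ℝ, √(∑ j, (W *ᵥ v) j ^ 2) ≤ σ * √(∑ i, v i ^ 2)

section SpectralNormLE

variable {ι κ : Type*} [Fintype ι] [Fintype κ] {W : Matrix κ ι ℝ} {σ : ℝ}

lemma SpectralNormLE.sum_sq_le (hW : SpectralNormLE W σ) (v : ι → ℝ) :
    ∑ j, (W *ᵥ v) j ^ 2 ≤ σ ^ 2 * ∑ i, v i ^ 2 := by
  have h := pow_le_pow_left₀ (Real.sqrt_nonneg _) (hW v) 2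
  rwa [mul_pow, Real.sq_sqrt (by positivity), Real.sq_sqrt (by positivity)] at h

lemma SpectralNormLE.nonneg [Nonempty ι] [DecidableEq ι] (hW : SpectralNormLE W σ) : 0 ≤ σ := by
  obtain ⟨i⟩ := ‹Nonempty ι›
  simpa [Pi.single_apply] using (Real.sqrt_nonneg _).trans (hW (Pi.single i 1))

lemma SpectralNormLE.eq_zero [DecidableEq ι] (hW : SpectralNormLE W 0) : W = 0 := by
  refine ext_of_mulVec_single fun i => funext fun j => ?_
  have h := hW.sum_sq_le (Pi.single i 1)
  rw [zero_pow two_ne_zero, zero_mul] at h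
  simpa using (Finset.sum_eq_zero_iff_of_nonneg fun j _ => sq_nonneg _).mp
    (le_antisymm h (by positivity)) j (Finset.mem_univ j)

lemma SpectralNormLE.trace_mul_mul_transpose_le [DecidableEq ι] (hW : SpectralNormLE W σ)
    {A : Matrix ι ι ℝ} (hA : A.PosSemidef) : (W * A * Wᵀ).trace ≤ σ ^ 2 * A.trace := by
  obtain ⟨S, rfl⟩ : ∃ S : Matrix ι ι ℝ, A = star S * S := by
    open scoped MatrixOrder in exact CStarAlgebra.nonneg_iff_eq_star_mul_self.mp hA.nonneg
  have hWS : W * (star S * S) * Wᵀ = (W * Sᵀ) * (W * Sᵀ)ᵀ := by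
    simp [star_eq_conjTranspose, Matrix.mul_assoc]
  have hS : star S * S = Sᵀ * Sᵀᵀ := by simp [star_eq_conjTranspose]
  calc (W * (star S * S) * Wᵀ).trace = ∑ l, ∑ r, (W *ᵥ S l) r ^ 2 := by
        rw [hWS, trace_mul_transpose_self_eq_sum_sq, Finset.sum_comm]
        simp [mul_apply, mulVec, dotProduct]
    _ ≤ ∑ l, σ ^ 2 * ∑ i, S l i ^ 2 := Finset.sum_le_sum fun l _ => hW.sum_sq_le (S l)
    _ = σ ^ 2 * (star S * S).trace := by
        rw [← Finset.mul_sum, hS, trace_mul_transpose_self_eq_sum_sq, Finset.sum_comm]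
        rfl

end SpectralNormLE

lemma sum_sq_le_sq_of_subgradient {κ : Type*} [Fintype κ] {f : (κ → ℝ) → ℝ} {ρ : ℝ}
    (hf : ∀ u v, |f u - f v| ≤ ρ * √(∑ j, (u j - v j) ^ 2)) {z g : κ → ℝ}
    (hg : ∀ u, f z + ∑ j, g j * (u j - z j) ≤ f u) : ∑ j, g j ^ 2 ≤ ρ ^ 2 := by
  have h1 := hg (z + g)
  have h2 := hf (z + g) z
  simp only [Pi.add_apply, add_sub_cancel_left] at h1 h2
  have hnn : 0 ≤ ∑ j, g j ^ 2 := by positivity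
  have hle : ∑ j, g j ^ 2 ≤ ρ * √(∑ j, g j ^ 2) := by
    calc ∑ j, g j ^ 2 = ∑ j, g j * g j := by simp only [sq]
      _ ≤ f (z + g) - f z := by linarith
      _ ≤ ρ * √(∑ j, g j ^ 2) := (le_abs_self _).trans h2
  nlinarith [Real.sq_sqrt hnn, Real.sqrt_nonneg (∑ j, g j ^ 2),
    sq_nonneg (√(∑ j, g j ^ 2) - ρ)]

lemma trace_sub_smul_vecMulVec_mul_mul_transpose {ι κ : Type*} [Fintype ι] [Fintype κ]
    [DecidableEq ι] {A : Matrix ι ι ℝ} (hA : Aᵀ = A) (hAinv : A * A⁻¹ = 1)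
    (V : Matrix κ ι ℝ) (η : ℝ) (u : κ → ℝ) (v : ι → ℝ) :
    ((V - η • vecMulVec u (A⁻¹ *ᵥ v)) * A * (V - η • vecMulVec u (A⁻¹ *ᵥ v))ᵀ).trace
      = (V * A * Vᵀ).trace - 2 * η * (u ⬝ᵥ (V *ᵥ v))
          + η ^ 2 * (u ⬝ᵥ u) * (v ⬝ᵥ (A⁻¹ *ᵥ v)) := by
  set G := vecMulVec u (A⁻¹ *ᵥ v)
  have hGA : G * A = vecMulVec u v := by
    rw [vecMulVec_mul, ← hA, vecMul_transpose, hA, mulVec_mulVec, hAinv, one_mulVec]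
  have hGAV : (G * A * Vᵀ).trace = u ⬝ᵥ (V *ᵥ v) := by
    rw [hGA, vecMulVec_mul, vecMul_transpose, trace_vecMulVec]
  have hVAG : (V * A * Gᵀ).trace = u ⬝ᵥ (V *ᵥ v) := by
    rw [← trace_transpose, transpose_mul, transpose_mul, transpose_transpose, hA,
      ← Matrix.mul_assoc, hGAV]
  have hGAG : (G * A * Gᵀ).trace = (u ⬝ᵥ u) * (v ⬝ᵥ (A⁻¹ *ᵥ v)) := by
    rw [hGA, transpose_vecMulVec, vecMulVec_mul, trace_vecMulVec, vecMul_vecMulVec,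
      dotProduct_smul, smul_eq_mul, mul_comm]
  simp only [transpose_sub, transpose_smul, Matrix.sub_mul, Matrix.mul_sub, trace_sub,
    Matrix.smul_mul, Matrix.mul_smul, trace_smul, smul_eq_mul, hGAV, hVAG, hGAG]
  ring

lemma two_mul_loss_sub_sub_le_trace_sub {ι κ : Type*} [Fintype ι] [Fintype κ] [DecidableEq ι]
    {A : Matrix ι ι ℝ} (hA : A.PosDef) {η ρ : ℝ} (hη : 0 ≤ η) {f : (κ → ℝ) → ℝ}
    (hf : ∀ u v, |f u - f v| ≤ ρ * √(∑ j, (u j - v j) ^ 2)) (V Wstar : Matrix κ ι ℝ)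
    (v : ι → ℝ) {u : κ → ℝ} (hu : ∀ w, f (V *ᵥ v) + ∑ j, u j * (w j - (V *ᵥ v) j) ≤ f w) :
    2 * η * (f (V *ᵥ v) - f (Wstar *ᵥ v)) - η ^ 2 * ρ ^ 2 * (v ⬝ᵥ (A⁻¹ *ᵥ v))
      ≤ ((V - Wstar) * A * (V - Wstar)ᵀ).trace
        - ((V - η • vecMulVec u (A⁻¹ *ᵥ v) - Wstar) * A
            * (V - η • vecMulVec u (A⁻¹ *ᵥ v) - Wstar)ᵀ).trace := by
  have hAt : Aᵀ = A := by rw [← conjTranspose_eq_transpose_of_trivial, hA.isHermitian.eq]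
  have hAinv : A * A⁻¹ = 1 := A.mul_nonsing_inv ((isUnit_iff_isUnit_det A).mp hA.isUnit)
  have hsub : f (V *ᵥ v) - f (Wstar *ᵥ v) ≤ u ⬝ᵥ ((V - Wstar) *ᵥ v) := by
    have hneg : u ⬝ᵥ ((V - Wstar) *ᵥ v) = -∑ j, u j * ((Wstar *ᵥ v) j - (V *ᵥ v) j) := by
      rw [sub_mulVec, dotProduct, ← Finset.sum_neg_distrib]
      exact Finset.sum_congr rfl fun j _ => by simp only [Pi.sub_apply]; ring
    linarith [hu (Wstar *ᵥ v)]
  have huu : u ⬝ᵥ u ≤ ρ ^ 2 := by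
    simpa only [dotProduct, ← sq] using sum_sq_le_sq_of_subgradient hf hu
  have hq : 0 ≤ v ⬝ᵥ (A⁻¹ *ᵥ v) := by
    simpa using hA.inv.posSemidef.dotProduct_mulVec_nonneg v
  rw [sub_right_comm, trace_sub_smul_vecMulVec_mul_mul_transpose hAt hAinv]
  nlinarith [mul_le_mul_of_nonneg_left hsub hη, mul_le_mul_of_nonneg_right huu hq, sq_nonneg η]

lemma iterate_update_apply_self {T : ℕ} {α β : Type*}
    {W : (Fin T → α) → ℕ → β} {w₀ : β} {G : β → α → β} (hW0 : ∀ ω, W ω 0 = w₀)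
    (hWt : ∀ ω (t : Fin T), W ω (t + 1) = G (W ω t) (ω t)) (ω : Fin T → α) (t : Fin T)
    (j : α) : W (Function.update ω t j) t = W ω t := by
  suffices ∀ s ≤ (t : ℕ), W (Function.update ω t j) s = W ω s from this t le_rfl
  intro s hs
  induction s with
  | zero => rw [hW0, hW0]
  | succ s ih =>
    have hsT : s < T := by omega
    have hne : (⟨s, hsT⟩ : Fin T) ≠ t := fun h => by rw [← h] at hs; simp at hs
    rw [hWt _ ⟨s, hsT⟩, hWt ω ⟨s, hsT⟩, ih (by omega), Function.update_of_ne hne]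

lemma apply_eq_apply_zero_of_forall_succ_eq {T : ℕ} {β : Type*} {V : ℕ → β}
    (hV : ∀ t : Fin T, V (t + 1) = V t) (t : Fin T) : V t = V 0 := by
  obtain ⟨s, hs⟩ := t
  induction s with
  | zero => rfl
  | succ s ih => exact (hV ⟨s, by omega⟩).trans (ih (by omega))

lemma card_mul_sum_apply_eval_eq_sum_sum {ι α : Type*} [Fintype ι] [DecidableEq ι]
    [Fintype α] (t : ι) (F : (ι → α) → α → ℝ)
    (hF : ∀ ω j, F (Function.update ω t j) = F ω) :
    Fintype.card α * ∑ ω, F ω (ω t) = ∑ ω, ∑ j, F ω j := by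
  set e := Equiv.funSplitAt t α
  have he : ∀ v r j, F (e.symm (v, r)) = F (e.symm (j, r)) := by
    intro v r j
    rw [← hF (e.symm (j, r)) v]
    congr 1
    funext u
    by_cases hu : u = t
    · subst hu; simp [e, Equiv.funSplitAt, Equiv.piSplitAt]
    · simp [e, Equiv.funSplitAt, Equiv.piSplitAt, hu]
  have hev : ∀ v r, e.symm (v, r) t = v := by simp [e, Equiv.funSplitAt, Equiv.piSplitAt]
  rw [← e.symm.sum_comp, ← e.symm.sum_comp, Fintype.sum_prod_type, Fintype.sum_prod_type]
  simp only [hev]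
  calc (Fintype.card α : ℝ) * ∑ v, ∑ r, F (e.symm (v, r)) v
      = ∑ _v : α, ∑ j, ∑ r, F (e.symm (j, r)) j := by
        rw [Finset.sum_const, Finset.card_univ, nsmul_eq_mul]
    _ = ∑ v, ∑ r, ∑ j, F (e.symm (v, r)) j := Finset.sum_congr rfl fun v _ => by
        rw [Finset.sum_comm]
        exact Finset.sum_congr rfl fun r _ => Finset.sum_congr rfl fun j _ =>
          congrFun (he v r j).symm j

section SGD

variable {ι κ : Type*} [Fintype ι] {m T : ℕ}
  {x : Fin m → ι → ℝ} {ℓ : Fin m → (κ → ℝ) → ℝ} {ρ η : ℝ}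
  {g : Matrix κ ι ℝ → Fin m → κ → ℝ} {A : Matrix ι ι ℝ}

lemma two_mul_sum_loss_sub_le [Fintype κ] [DecidableEq ι] (hA : A.PosDef) (hη : 0 ≤ η)
    (hlip : ∀ i, ∀ u v : κ → ℝ, |ℓ i u - ℓ i v| ≤ ρ * √(∑ j, (u j - v j) ^ 2))
    (hg : ∀ W' i, ∀ u : κ → ℝ,
      ℓ i (W' *ᵥ x i) + ∑ j, g W' i j * (u j - (W' *ᵥ x i) j) ≤ ℓ i u)
    (Wstar : Matrix κ ι ℝ) (i : Fin T → Fin m) (V : ℕ → Matrix κ ι ℝ) (hV0 : V 0 = 0)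
    (hV : ∀ t : Fin T, V (t + 1) = V t - η • vecMulVec (g (V t) (i t)) (A⁻¹ *ᵥ x (i t))) :
    2 * η * ∑ t : Fin T, (ℓ (i t) (V t *ᵥ x (i t)) - ℓ (i t) (Wstar *ᵥ x (i t)))
      ≤ (Wstar * A * Wstarᵀ).trace
          + η ^ 2 * ρ ^ 2 * ∑ t : Fin T, x (i t) ⬝ᵥ (A⁻¹ *ᵥ x (i t)) := by
  set Φ : ℕ → ℝ := fun s => ((V s - Wstar) * A * (V s - Wstar)ᵀ).trace
  have hstep : ∀ t : Fin T,
      2 * η * (ℓ (i t) (V t *ᵥ x (i t)) - ℓ (i t) (Wstar *ᵥ x (i t)))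
        - η ^ 2 * ρ ^ 2 * (x (i t) ⬝ᵥ (A⁻¹ *ᵥ x (i t))) ≤ Φ t - Φ (t + 1) := fun t => by
    simp only [Φ, hV t]
    exact two_mul_loss_sub_sub_le_trace_sub hA hη (hlip (i t)) _ _ _ (hg (V t) (i t))
  have htele : ∑ t : Fin T, (Φ t - Φ (t + 1)) = Φ 0 - Φ T :=
    (Fin.sum_univ_eq_sum_range (fun s => Φ s - Φ (s + 1)) T).trans (Finset.sum_range_sub' Φ T)
  have hΦ0 : Φ 0 = (Wstar * A * Wstarᵀ).trace := by simp [Φ, hV0]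
  have hΦT : 0 ≤ Φ T := by
    simpa [Φ] using (hA.posSemidef.mul_mul_conjTranspose_same (V T - Wstar)).trace_nonneg
  have h := Finset.sum_le_sum fun t (_ : t ∈ Finset.univ) => hstep t
  rw [htele, hΦ0, Finset.sum_sub_distrib, ← Finset.mul_sum, ← Finset.mul_sum] at h
  linarith

lemma risk_smul_sum_le {L : Matrix κ ι ℝ → ℝ} (hconv : ∀ i, ConvexOn ℝ Set.univ (ℓ i))
    (hL : ∀ W, L W = (1 / (m : ℝ)) * ∑ i, ℓ i (W *ᵥ x i)) (hT : 0 < T)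
    (V : Fin T → Matrix κ ι ℝ) :
    L ((T : ℝ)⁻¹ • ∑ t, V t) ≤ (T : ℝ)⁻¹ * ∑ t, L (V t) := by
  have hw : ∑ _t : Fin T, (T : ℝ)⁻¹ = 1 := by simp [hT.ne']
  have hi : ∀ i, ℓ i (((T : ℝ)⁻¹ • ∑ t, V t) *ᵥ x i) ≤ ∑ t, (T : ℝ)⁻¹ * ℓ i (V t *ᵥ x i) := by
    intro i
    simpa [smul_mulVec, sum_mulVec, Finset.smul_sum] using
      (hconv i).map_sum_le (t := Finset.univ) (w := fun _ => (T : ℝ)⁻¹)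
        (p := fun t => V t *ᵥ x i) (fun _ _ => by positivity) hw fun _ _ => Set.mem_univ _
  simp only [hL, Finset.mul_sum]
  calc ∑ i, 1 / (m : ℝ) * ℓ i (((T : ℝ)⁻¹ • ∑ t, V t) *ᵥ x i)
      ≤ ∑ i, 1 / (m : ℝ) * ∑ t, (T : ℝ)⁻¹ * ℓ i (V t *ᵥ x i) :=
        Finset.sum_le_sum fun i _ => mul_le_mul_of_nonneg_left (hi i) (by positivity)
    _ = ∑ t, ∑ i, (T : ℝ)⁻¹ * (1 / (m : ℝ) * ℓ i (V t *ᵥ x i)) := by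
        simp only [Finset.mul_sum]
        rw [Finset.sum_comm]
        exact Finset.sum_congr rfl fun _ _ => Finset.sum_congr rfl fun _ _ => by ring

lemma sum_risk_sub_eq_sum_loss_sub [DecidableEq ι] {L : Matrix κ ι ℝ → ℝ} (hm : 0 < m)
    (hL : ∀ W, L W = (1 / (m : ℝ)) * ∑ i, ℓ i (W *ᵥ x i))
    {W : (Fin T → Fin m) → ℕ → Matrix κ ι ℝ} (hW0 : ∀ ω, W ω 0 = 0)
    (hWt : ∀ ω (t : Fin T),
      W ω (t + 1) = W ω t - η • vecMulVec (g (W ω t) (ω t)) (A⁻¹ *ᵥ x (ω t)))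
    (Wstar : Matrix κ ι ℝ) (t : Fin T) :
    ∑ ω, (L (W ω t) - L Wstar)
      = ∑ ω, (ℓ (ω t) (W ω t *ᵥ x (ω t)) - ℓ (ω t) (Wstar *ᵥ x (ω t))) := by
  have h := card_mul_sum_apply_eval_eq_sum_sum t
    (fun ω j => ℓ j (W ω t *ᵥ x j) - ℓ j (Wstar *ᵥ x j)) fun ω j => by
      rw [iterate_update_apply_self (G := fun V j => V - η • vecMulVec (g V j) (A⁻¹ *ᵥ x j))
        hW0 hWt]
  have hrisk : ∀ ω, ∑ j, (ℓ j (W ω t *ᵥ x j) - ℓ j (Wstar *ᵥ x j))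
      = m * (L (W ω t) - L Wstar) := by
    intro ω
    rw [Finset.sum_sub_distrib, hL, hL]
    field_simp
  simp only [hrisk, Fintype.card_fin, ← Finset.mul_sum] at h
  exact (mul_left_cancel₀ (by positivity) h).symm

lemma sum_dotProduct_mulVec_apply_eval (hm : 0 < m) {C : Matrix ι ι ℝ}
    (hC : C = (1 / (m : ℝ)) • ∑ i, vecMulVec (x i) (x i)) (M : Matrix ι ι ℝ) (t : Fin T) :
    ∑ ω : Fin T → Fin m, x (ω t) ⬝ᵥ (M *ᵥ x (ω t)) = m ^ T * (M * C).trace := by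
  have h := card_mul_sum_apply_eval_eq_sum_sum t (fun _ j => x j ⬝ᵥ (M *ᵥ x j)) fun _ _ => rfl
  have hMC : ∑ j, x j ⬝ᵥ (M *ᵥ x j) = m * (M * C).trace := by
    rw [hC, Matrix.mul_smul, trace_smul, Matrix.mul_sum, trace_sum]
    simp only [mul_vecMulVec, trace_vecMulVec, dotProduct_comm (M *ᵥ _), smul_eq_mul]
    field_simp
  rw [Finset.sum_const, Finset.card_univ, Fintype.card_fun, Fintype.card_fin, nsmul_eq_mul, hMC,
    Fintype.card_fin] at h
  refine mul_left_cancel₀ (by positivity : (m : ℝ) ≠ 0) ?_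
  rw [h]
  push_cast
  ring

theorem two_mul_mul_sum_risk_average_sub_le [Fintype κ] [DecidableEq ι]
    {L : Matrix κ ι ℝ → ℝ} {C : Matrix ι ι ℝ}
    (hm : 0 < m) (hT : 0 < T) (hconv : ∀ i, ConvexOn ℝ Set.univ (ℓ i))
    (hlip : ∀ i, ∀ u v : κ → ℝ, |ℓ i u - ℓ i v| ≤ ρ * √(∑ j, (u j - v j) ^ 2))
    (hL : ∀ W, L W = (1 / (m : ℝ)) * ∑ i, ℓ i (W *ᵥ x i))
    (hC : C = (1 / (m : ℝ)) • ∑ i, vecMulVec (x i) (x i)) (hA : A.PosDef) (hη : 0 ≤ η)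
    (hg : ∀ W' i, ∀ u : κ → ℝ, ℓ i (W' *ᵥ x i) + ∑ j, g W' i j * (u j - (W' *ᵥ x i) j) ≤ ℓ i u)
    {W : (Fin T → Fin m) → ℕ → Matrix κ ι ℝ} (hW0 : ∀ ω, W ω 0 = 0)
    (hWt : ∀ ω (t : Fin T),
      W ω (t + 1) = W ω t - η • vecMulVec (g (W ω t) (ω t)) (A⁻¹ *ᵥ x (ω t)))
    (Wstar : Matrix κ ι ℝ) :
    2 * η * T * ∑ ω : Fin T → Fin m, (L ((T : ℝ)⁻¹ • ∑ t : Fin T, W ω t) - L Wstar)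
      ≤ m ^ T * ((Wstar * A * Wstarᵀ).trace + η ^ 2 * ρ ^ 2 * T * (A⁻¹ * C).trace) := by
  have hjensen : ∀ ω, T * (L ((T : ℝ)⁻¹ • ∑ t : Fin T, W ω t) - L Wstar)
      ≤ ∑ t : Fin T, (L (W ω t) - L Wstar) := fun ω => by
    have hT' : (0 : ℝ) < T := by exact_mod_cast hT
    have h := mul_le_mul_of_nonneg_left (risk_smul_sum_le hconv hL hT fun t => W ω t) hT'.le
    rw [← mul_assoc, mul_inv_cancel₀ hT'.ne', one_mul] at h
    rw [Finset.sum_sub_distrib, Finset.sum_const, Finset.card_univ, Fintype.card_fin,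
      nsmul_eq_mul, mul_sub]
    linarith
  calc 2 * η * T * ∑ ω, (L ((T : ℝ)⁻¹ • ∑ t : Fin T, W ω t) - L Wstar)
      = ∑ ω, 2 * η * (T * (L ((T : ℝ)⁻¹ • ∑ t : Fin T, W ω t) - L Wstar)) := by
        rw [Finset.mul_sum]; simp only [mul_assoc]
    _ ≤ ∑ ω, 2 * η * ∑ t : Fin T, (L (W ω t) - L Wstar) :=
        Finset.sum_le_sum fun ω _ => mul_le_mul_of_nonneg_left (hjensen ω) (by positivity)
    _ = ∑ ω, 2 * η * ∑ t : Fin T, (ℓ (ω t) (W ω t *ᵥ x (ω t)) - ℓ (ω t) (Wstar *ᵥ x (ω t))) := by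
        simp only [← Finset.mul_sum]
        rw [Finset.sum_comm, Finset.sum_comm (f := fun ω (t : Fin T) => _ - _)]
        simp only [sum_risk_sub_eq_sum_loss_sub hm hL hW0 hWt]
    _ ≤ ∑ ω : Fin T → Fin m, ((Wstar * A * Wstarᵀ).trace
          + η ^ 2 * ρ ^ 2 * ∑ t : Fin T, x (ω t) ⬝ᵥ (A⁻¹ *ᵥ x (ω t))) :=
        Finset.sum_le_sum fun ω _ =>
          two_mul_sum_loss_sub_le hA hη hlip hg Wstar ω (W ω) (hW0 ω) (hWt ω)
    _ = m ^ T * ((Wstar * A * Wstarᵀ).trace + η ^ 2 * ρ ^ 2 * T * (A⁻¹ * C).trace) := by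
        rw [Finset.sum_add_distrib, ← Finset.mul_sum, Finset.sum_comm]
        simp only [sum_dotProduct_mulVec_apply_eval hm hC, Finset.sum_const, Finset.card_univ,
          Fintype.card_fun, Fintype.card_fin, nsmul_eq_mul]
        push_cast
        ring

end SGD

theorem stmt12_general {n p m k : ℕ} (hm : 0 < m) (hkn : k < n)
    (x : Fin m → Fin n → ℝ) (ρ : ℝ) (hρ : 0 < ρ)
    (ℓ : Fin m → (Fin p → ℝ) → ℝ)
    (hconv : ∀ i, ConvexOn ℝ Set.univ (ℓ i))
    (hlip : ∀ i, ∀ u v : Fin p → ℝ,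
      |ℓ i u - ℓ i v| ≤ ρ * Real.sqrt (∑ j, (u j - v j) ^ 2))
    (L : Matrix (Fin p) (Fin n) ℝ → ℝ)
    (hL : ∀ W, L W = (1 / (m : ℝ)) * ∑ i, ℓ i (W *ᵥ x i))
    (Wstar : Matrix (Fin p) (Fin n) ℝ)
    (σ : ℝ)
    (hσ : ∀ v : Fin n → ℝ,
      Real.sqrt (∑ j, ((Wstar *ᵥ v) j) ^ 2) ≤ σ * Real.sqrt (∑ i, (v i) ^ 2))
    (C : Matrix (Fin n) (Fin n) ℝ)
    (hC : C = (1 / (m : ℝ)) • ∑ i, Matrix.vecMulVec (x i) (x i))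
    -- eigenvalue decomposition `C = U D Uᵀ` with decreasing eigenvalues `d`
    (U : Matrix (Fin n) (Fin n) ℝ) (hU : Uᵀ * U = 1)
    (d : Fin n → ℝ)
    (hCdec : C = U * Matrix.diagonal d * Uᵀ)
    -- `λ_k > 0`, i.e. the top `k` eigenvalues are positive
    (hlamk : ∀ i : Fin k, 0 < d (Fin.castLE hkn.le i))
    -- `Q = U_k`, `C_k = U_k D_k U_kᵀ`
    (Q : Matrix (Fin n) (Fin k) ℝ)
    (hQ : Q = U.submatrix id (Fin.castLE hkn.le))
    (Ck : Matrix (Fin n) (Fin n) ℝ)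
    (hCk : Ck = Q * Matrix.diagonal (fun i : Fin k => d (Fin.castLE hkn.le i)) * Qᵀ)
    (htr : Ck.trace < C.trace)
    -- `B = (Qᵀ C Q)^{1/2}`, the PSD square root
    (B : Matrix (Fin k) (Fin k) ℝ)
    (hBpsd : B.PosSemidef) (hBsq : B * B = Qᵀ * C * Q)
    (a : ℝ)
    (ha : a = Real.sqrt ((C.trace - (Qᵀ * C * Q).trace) / ((n : ℝ) - (k : ℝ))))
    (A : Matrix (Fin n) (Fin n) ℝ)
    (hA : A = Q * B * Qᵀ + a • (1 - Q * Qᵀ))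
    (T : ℕ) (hT : 0 < T)
    (η : ℝ) (hη : η = σ / (ρ * Real.sqrt T))
    (g : Matrix (Fin p) (Fin n) ℝ → Fin m → (Fin p → ℝ))
    (hg : ∀ W' i, ∀ u : Fin p → ℝ,
      ℓ i (W' *ᵥ x i) + ∑ j, g W' i j * (u j - (W' *ᵥ x i) j) ≤ ℓ i u)
    (W : (Fin T → Fin m) → ℕ → Matrix (Fin p) (Fin n) ℝ)
    (hW0 : ∀ ω, W ω 0 = 0)
    (hWt : ∀ ω (t : Fin T),
      W ω ((t : ℕ) + 1)
        = W ω (t : ℕ)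
          - η • Matrix.vecMulVec (g (W ω (t : ℕ)) (ω t)) (A⁻¹ *ᵥ x (ω t))) :
    (∑ ω : Fin T → Fin m,
        (L ((T : ℝ)⁻¹ • ∑ t : Fin T, W ω (t : ℕ)) - L Wstar)) / (m : ℝ) ^ T
      ≤ (σ * ρ / Real.sqrt T)
          * ((∑ i : Fin k, Real.sqrt (d (Fin.castLE hkn.le i)))
              + Real.sqrt (((n : ℝ) - (k : ℝ)) * (C.trace - Ck.trace))) := by
  obtain ⟨hApos, htrA, htrAC⟩ :=
    lowRankConditioner_posDef_and_traces hkn hU hCdec hlamk hQ hCk htr hBpsd hBsq ha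
  replace hA : A = lowRankConditioner Q B a := hA
  subst hA
  have hσ' : SpectralNormLE Wstar σ := hσ
  have : Nonempty (Fin n) := ⟨⟨0, by omega⟩⟩
  rcases hσ'.nonneg.eq_or_lt with rfl | hσpos
  · -- `σ = 0` forces `W* = 0` and `η = 0`, so the iterates never leave `0`
    have hW : ∀ ω (t : Fin T), W ω t = 0 := fun ω t =>
      (apply_eq_apply_zero_of_forall_succ_eq (fun t => by simp [hWt, hη]) t).trans (hW0 ω)
    simp [hW, hσ'.eq_zero]
  have hT' : (0 : ℝ) < T := by exact_mod_cast hT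
  have hη0 : 0 < η := hη ▸ by positivity
  have hgap := two_mul_mul_sum_risk_average_sub_le hm hT hconv hlip hL hC hApos hη0.le hg
    hW0 hWt Wstar
  have hWAW := hσ'.trace_mul_mul_transpose_le hApos.posSemidef
  rw [htrA] at hWAW
  rw [htrAC] at hgap
  rw [div_le_iff₀ (by positivity)]
  refine le_of_mul_le_mul_left ?_ (by positivity : 0 < 2 * η * T)
  calc _ ≤ _ := hgap
    _ ≤ (m : ℝ) ^ T * (σ ^ 2 * _ + η ^ 2 * ρ ^ 2 * T * _) := by gcongr
    _ = _ := by
      rw [hη]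
      field_simp
      rw [Real.sq_sqrt hT'.le]
      ring

/-- Theorem 3 of the paper. Conditioned SGD with the low-rank
conditioner built from the exact best rank-`k` approximation of
`C = U D Uᵀ` (eigenvalues `d` decreasing, `λ_k > 0`): taking `Q = U_k`
(the first `k` columns of `U`), `B = (Qᵀ C Q)^{1/2}`,
`a = √((tr(C) − tr(Qᵀ C Q))/(n−k))`, `A = Q B Qᵀ + a(I − QQᵀ)` and learning
rate `η = σ/(ρ√T)` with `σ ≥ ‖W*‖_spectral`, one gets
`E[L(W̄) − L(W*)] ≤ (σρ/√T) (tr(C_k^{1/2}) + √((n−k)(tr(C) − tr(C_k))))`,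
where `C_k = U_k D_k U_kᵀ` and `tr(C_k^{1/2}) = Σ_{i<k} √λᵢ`. -/
theorem stmt12 {n p m k : ℕ} (hm : 0 < m) (hkn : k < n)
    (x : Fin m → Fin n → ℝ) (ρ : ℝ) (hρ : 0 < ρ)
    (ℓ : Fin m → (Fin p → ℝ) → ℝ)
    (hconv : ∀ i, ConvexOn ℝ Set.univ (ℓ i))
    (hlip : ∀ i, ∀ u v : Fin p → ℝ,
      |ℓ i u - ℓ i v| ≤ ρ * Real.sqrt (∑ j, (u j - v j) ^ 2))
    (L : Matrix (Fin p) (Fin n) ℝ → ℝ)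
    (hL : ∀ W, L W = (1 / (m : ℝ)) * ∑ i, ℓ i (W *ᵥ x i))
    (Wstar : Matrix (Fin p) (Fin n) ℝ)
    (hWstar : ∀ W, L Wstar ≤ L W)
    (σ : ℝ)
    (hσ : ∀ v : Fin n → ℝ,
      Real.sqrt (∑ j, ((Wstar *ᵥ v) j) ^ 2) ≤ σ * Real.sqrt (∑ i, (v i) ^ 2))
    (C : Matrix (Fin n) (Fin n) ℝ)
    (hC : C = (1 / (m : ℝ)) • ∑ i, Matrix.vecMulVec (x i) (x i))
    -- eigenvalue decomposition `C = U D Uᵀ` with decreasing eigenvalues `d`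
    (U : Matrix (Fin n) (Fin n) ℝ) (hU : Uᵀ * U = 1)
    (d : Fin n → ℝ) (hd : Antitone d)
    (hCdec : C = U * Matrix.diagonal d * Uᵀ)
    -- `λ_k > 0`, i.e. the top `k` eigenvalues are positive
    (hlamk : ∀ i : Fin k, 0 < d (Fin.castLE hkn.le i))
    -- `Q = U_k`, `C_k = U_k D_k U_kᵀ`
    (Q : Matrix (Fin n) (Fin k) ℝ)
    (hQ : Q = U.submatrix id (Fin.castLE hkn.le))
    (Ck : Matrix (Fin n) (Fin n) ℝ)
    (hCk : Ck = Q * Matrix.diagonal (fun i : Fin k => d (Fin.castLE hkn.le i)) * Qᵀ)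
    (htr : Ck.trace < C.trace)
    -- `B = (Qᵀ C Q)^{1/2}`, the PSD square root
    (B : Matrix (Fin k) (Fin k) ℝ)
    (hBpsd : B.PosSemidef) (hBsq : B * B = Qᵀ * C * Q)
    (a : ℝ)
    (ha : a = Real.sqrt ((C.trace - (Qᵀ * C * Q).trace) / ((n : ℝ) - (k : ℝ))))
    (A : Matrix (Fin n) (Fin n) ℝ)
    (hA : A = Q * B * Qᵀ + a • (1 - Q * Qᵀ))
    (T : ℕ) (hT : 0 < T)
    (η : ℝ) (hη : η = σ / (ρ * Real.sqrt T))
    (g : Matrix (Fin p) (Fin n) ℝ → Fin m → (Fin p → ℝ))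
    (hg : ∀ W' i, ∀ u : Fin p → ℝ,
      ℓ i (W' *ᵥ x i) + ∑ j, g W' i j * (u j - (W' *ᵥ x i) j) ≤ ℓ i u)
    (W : (Fin T → Fin m) → ℕ → Matrix (Fin p) (Fin n) ℝ)
    (hW0 : ∀ ω, W ω 0 = 0)
    (hWt : ∀ ω (t : Fin T),
      W ω ((t : ℕ) + 1)
        = W ω (t : ℕ)
          - η • Matrix.vecMulVec (g (W ω (t : ℕ)) (ω t)) (A⁻¹ *ᵥ x (ω t))) :
    (∑ ω : Fin T → Fin m,
        (L ((T : ℝ)⁻¹ • ∑ t : Fin T, W ω (t : ℕ)) - L Wstar)) / (m : ℝ) ^ T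
      ≤ (σ * ρ / Real.sqrt T)
          * ((∑ i : Fin k, Real.sqrt (d (Fin.castLE hkn.le i)))
              + Real.sqrt (((n : ℝ) - (k : ℝ)) * (C.trace - Ck.trace))) :=
  stmt12_general hm hkn x ρ hρ ℓ hconv hlip L hL Wstar σ hσ C hC U hU d hCdec hlamk Q hQ Ck hCk htr
    B hBpsd hBsq a ha A hA T hT η hη g hg W hW0 hWt
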